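/- arXiv:2101.04205 — 7 statements merged into one kernel-verified Lean document; each statement's English description precedes it below -/
import Mathlib

section
/- Let a > 0 and for each δ ∈ [0, a] let g_δ : [0,∞) → ℝ be given. Assume: (i) the family (g_δ)_{0≤δ≤a} is equibounded (uniformly bounded); (ii) g_δ(0) = 0 for every δ; (iii) each g_δ is continuously differentiable on [0,∞) (with one-sided derivative at 0); and (iv) the derivatives g_δ' converge locally uniformly on [0,∞) to the continuous function g_0' as δ ↘ 0. Then for every α > 0, the functions v ↦ δ^{−α} · g_δ(δ^α · v) converge, as δ ↘ 0, to the function v ↦ g_0'(0) · v, locally uniformly in v ∈ [0,∞). -/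
open Set Filter

/-- Lemma 4.2 (first assertion) of "Exceptional times when the KPZ fixed point violates
Johansson's conjecture on maximizer uniqueness": for an equibounded family
`(g δ)_{0 ≤ δ ≤ a}` of continuously differentiable functions on `[0, ∞)` vanishing at `0`,
whose derivatives `g' δ` converge locally uniformly on `[0, ∞)` to the continuous
derivative `g' 0` as `δ ↘ 0`, the rescaled functions `v ↦ δ^{-α} g δ (δ^α v)` converge
to `v ↦ (g' 0 0) * v` locally uniformly on `[0, ∞)` as `δ ↘ 0`. -/
theorem rescaled_g_converges
    (a : ℝ) (ha : 0 < a) (g g' : ℝ → ℝ → ℝ)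
    (hbdd : ∃ B : ℝ, ∀ δ ∈ Icc (0 : ℝ) a, ∀ v ∈ Ici (0 : ℝ), |g δ v| ≤ B)
    (hzero : ∀ δ ∈ Icc (0 : ℝ) a, g δ 0 = 0)
    (hderiv : ∀ δ ∈ Icc (0 : ℝ) a, ∀ v ∈ Ici (0 : ℝ),
      HasDerivWithinAt (g δ) (g' δ v) (Ici 0) v)
    (hderiv_cont : ∀ δ ∈ Icc (0 : ℝ) a, ContinuousOn (g' δ) (Ici 0))
    (hconv : ∀ R : ℝ, 0 ≤ R →
      TendstoUniformlyOn (fun δ => g' δ) (g' 0) (nhdsWithin 0 (Ioi 0)) (Icc 0 R))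
    (hcont0 : ContinuousOn (g' 0) (Ici 0))
    (α : ℝ) (hα : 0 < α) (R : ℝ) (hR : 0 ≤ R) :
    TendstoUniformlyOn (fun δ v => g δ (δ ^ α * v) / δ ^ α)
      (fun v => g' 0 0 * v) (nhdsWithin 0 (Ioi 0)) (Icc 0 R) := by
  rw [Metric.tendstoUniformlyOn_iff]
  intro ε hε
  set c := g' 0 0 with hc_def
  have hR1 : (0:ℝ) < R + 1 := by linarith
  set ε' := ε / (2 * (R + 1)) with hε'def
  have hε' : 0 < ε' := by positivity
  have hc : ContinuousWithinAt (g' 0) (Ici 0) 0 := hcont0 0 Set.self_mem_Ici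
  rw [Metric.continuousWithinAt_iff] at hc
  obtain ⟨η, hη, hη'⟩ := hc ε' hε'
  have h1 := hconv η hη.le
  rw [Metric.tendstoUniformlyOn_iff] at h1
  have h2 := h1 ε' hε'
  have htend : Tendsto (fun δ : ℝ => δ ^ α) (nhdsWithin 0 (Ioi 0)) (nhds 0) := by
    have h := (Real.continuousAt_rpow_const 0 α (Or.inr hα.le)).tendsto
    rw [Real.zero_rpow hα.ne'] at h
    exact h.mono_left nhdsWithin_le_nhds
  have h3 : ∀ᶠ δ in nhdsWithin 0 (Ioi 0), δ ^ α < η / (R + 1) := by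
    have hpos : 0 < η / (R + 1) := by positivity
    exact htend (Iio_mem_nhds hpos)
  have h5 : ∀ᶠ δ in nhdsWithin 0 (Ioi 0), δ < a :=
    mem_nhdsWithin_of_mem_nhds (Iio_mem_nhds ha)
  filter_upwards [h2, h3, h5, self_mem_nhdsWithin] with δ hδ2 hδ3 hδa hδpos
  intro v hv
  have hδpos' : (0:ℝ) < δ := hδpos
  have hs : 0 < δ ^ α := Real.rpow_pos_of_pos hδpos' α
  have hδmem : δ ∈ Icc (0:ℝ) a := ⟨hδpos'.le, hδa.le⟩
  set s := δ ^ α with hs_def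
  set x := s * v with hx_def
  have hv0 : (0:ℝ) ≤ v := hv.1
  have hvR : v ≤ R := hv.2
  have hx0 : (0:ℝ) ≤ x := by positivity
  have hxη : x < η := by
    have h1 : x ≤ s * (R + 1) := by nlinarith
    have h2 : s * (R + 1) < η := (lt_div_iff₀ hR1).mp hδ3
    linarith
  -- derivative bound
  have hbound : ∀ t ∈ Icc (0:ℝ) x, ‖g' δ t - c‖ ≤ 2 * ε' := by
    intro t ht
    have ht0 : (0:ℝ) ≤ t := ht.1
    have htη : t < η := lt_of_le_of_lt ht.2 hxη
    have htIcc : t ∈ Icc (0:ℝ) η := ⟨ht0, htη.le⟩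
    have e1 : dist (g' δ t) (g' 0 t) < ε' := by
      have := hδ2 t htIcc
      rwa [dist_comm] at this
    have e2 : dist (g' 0 t) c < ε' := by
      apply hη' ht0
      rw [Real.dist_eq, sub_zero, abs_of_nonneg ht0]
      exact htη
    have e3 : dist (g' δ t) c < 2 * ε' :=
      lt_of_le_of_lt (dist_triangle (g' δ t) (g' 0 t) c) (by linarith)
    rw [Real.dist_eq] at e3
    calc ‖g' δ t - c‖ = |g' δ t - c| := rfl
    _ ≤ 2 * ε' := e3.le
  have hF : ∀ t ∈ Icc (0:ℝ) x, HasDerivWithinAt (fun t => g δ t - c * t)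
      (g' δ t - c) (Icc 0 x) t := by
    intro t ht
    have hd := (hderiv δ hδmem t ht.1).mono (Icc_subset_Ici_self : Icc (0:ℝ) x ⊆ Ici 0)
    have hid : HasDerivWithinAt (fun t : ℝ => c * t) c (Icc 0 x) t := by
      simpa using (hasDerivWithinAt_id t (Icc (0:ℝ) x)).const_mul c
    exact hd.sub hid
  have key := (convex_Icc (0:ℝ) x).norm_image_sub_le_of_norm_hasDerivWithin_le
    hF hbound (left_mem_Icc.mpr hx0) (right_mem_Icc.mpr hx0)
  have hg0 : g δ 0 = 0 := hzero δ hδmem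
  have key2 : |g δ x - c * x| ≤ 2 * ε' * x := by
    have hn : ‖x - (0:ℝ)‖ = x := by simp [abs_of_nonneg hx0]
    calc |g δ x - c * x| = ‖(g δ x - c * x) - (g δ 0 - c * 0)‖ := by
          rw [hg0]; simp [Real.norm_eq_abs]
    _ ≤ 2 * ε' * ‖x - (0:ℝ)‖ := key
    _ = 2 * ε' * x := by rw [hn]
  rw [Real.dist_eq]
  have hxs : x / s = v := by rw [hx_def, mul_comm, mul_div_assoc, div_self hs.ne', mul_one]
  have : |c * v - g δ x / s| = |g δ x - c * x| / s := by
    rw [abs_sub_comm, ← hxs, mul_div_assoc', div_sub_div_same, abs_div, abs_of_pos hs]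
  rw [this]
  calc |g δ x - c * x| / s ≤ 2 * ε' * x / s := by gcongr
  _ = 2 * ε' * v := by rw [mul_div_assoc, hxs]
  _ ≤ 2 * ε' * R := by nlinarith
  _ = ε * (R / (R + 1)) := by rw [hε'def]; field_simp
  _ < ε := by
      have : R / (R + 1) < 1 := by rw [div_lt_one hR1]; linarith
      nlinarith
end

section
/- Let a > 0 and α > 0. For each δ ∈ (0, a] let g_δ : [0,∞) → ℝ be continuous, with the family (g_δ) uniformly bounded, and suppose g_δ converges locally uniformly on [0,∞), as δ ↘ 0, to a continuous function g_0 : [0,∞) → ℝ. Then lim_{δ ↘ 0} sup_{0 ≤ ε ≤ δ^α} | ∫_0^∞ p_δ(v) · g_δ(v + ε) dv − (1/2) · g_0(0) | = 0; that is, the integrals ∫_0^∞ p_δ(v) g_δ(v+ε) dv converge to (1/2) g_0(0) as δ ↘ 0, uniformly over ε ∈ [0, δ^α]. -/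
open Set Filter MeasureTheory

/-- The heat kernel `p_ℓ(u) = (4πℓ)^{-1/2} exp(-u²/(4ℓ))`, the transition density of
a Brownian motion of rate two. -/
noncomputable def heatKernel (ℓ u : ℝ) : ℝ :=
  (Real.sqrt (4 * Real.pi * ℓ))⁻¹ * Real.exp (-u ^ 2 / (4 * ℓ))

lemma heatKernel_eq {ℓ : ℝ} (hℓ : 0 < ℓ) :
    heatKernel ℓ = fun u => (Real.sqrt (4 * Real.pi * ℓ))⁻¹ * Real.exp (-(1/(4*ℓ)) * u ^ 2) := by
  funext u
  unfold heatKernel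
  congr 2
  field_simp

lemma heatKernel_pos {ℓ : ℝ} (hℓ : 0 < ℓ) (u : ℝ) : 0 < heatKernel ℓ u := by
  unfold heatKernel
  have h : 0 < 4 * Real.pi * ℓ := by positivity
  have := Real.sqrt_pos.mpr h
  positivity

lemma heatKernel_integrable {ℓ : ℝ} (hℓ : 0 < ℓ) : Integrable (heatKernel ℓ) := by
  rw [heatKernel_eq hℓ]
  exact (integrable_exp_neg_mul_sq (by positivity)).const_mul _

lemma heatKernel_integral {ℓ : ℝ} (hℓ : 0 < ℓ) :
    ∫ v in Ioi (0:ℝ), heatKernel ℓ v = 1 / 2 := by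
  rw [heatKernel_eq hℓ]
  rw [integral_const_mul, integral_gaussian_Ioi]
  have h1 : Real.pi / (1/(4*ℓ)) = 4 * Real.pi * ℓ := by field_simp
  rw [h1]
  have h2 : 0 < Real.sqrt (4 * Real.pi * ℓ) := Real.sqrt_pos.mpr (by positivity)
  field_simp

lemma heatKernel_tail {ℓ η : ℝ} (hℓ : 0 < ℓ) (hη : 0 < η) :
    ∫ v in Ioi η, heatKernel ℓ v ≤ Real.exp (-η ^ 2 / (8 * ℓ)) := by
  have hc : (0:ℝ) < Real.sqrt (4 * Real.pi * ℓ) := Real.sqrt_pos.mpr (by positivity)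
  set c := (Real.sqrt (4 * Real.pi * ℓ))⁻¹ with hc_def
  have hcpos : 0 < c := inv_pos.mpr hc
  -- bound function
  have hb : (0:ℝ) < 1/(8*ℓ) := by positivity
  have hIbound : Integrable (fun v : ℝ => Real.exp (-η ^ 2 / (8 * ℓ)) * (c * Real.exp (-(1/(8*ℓ)) * v ^ 2))) :=
    ((integrable_exp_neg_mul_sq hb).const_mul c).const_mul _
  have step1 : ∫ v in Ioi η, heatKernel ℓ v
      ≤ ∫ v in Ioi η, Real.exp (-η ^ 2 / (8 * ℓ)) * (c * Real.exp (-(1/(8*ℓ)) * v ^ 2)) := by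
    apply setIntegral_mono_on ((heatKernel_integrable hℓ).integrableOn)
      (hIbound.integrableOn) measurableSet_Ioi
    intro v hv
    have hvη : η ≤ v := le_of_lt hv
    have hv0 : 0 < v := lt_of_lt_of_le hη hvη
    rw [heatKernel_eq hℓ]
    simp only
    rw [show Real.exp (-η ^ 2 / (8 * ℓ)) * (c * Real.exp (-(1/(8*ℓ)) * v ^ 2))
        = c * (Real.exp (-η ^ 2 / (8 * ℓ)) * Real.exp (-(1/(8*ℓ)) * v ^ 2)) from by ring]
    apply mul_le_mul_of_nonneg_left _ (le_of_lt hcpos)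
    rw [← Real.exp_add]
    apply Real.exp_le_exp.mpr
    have h2 : η ^ 2 ≤ v ^ 2 := by nlinarith
    have h8 : (0:ℝ) < 8 * ℓ := by positivity
    have e1 : -(1/(4*ℓ))*v^2 = (-v^2 - v^2)/(8*ℓ) := by field_simp; ring
    have e2 : -η^2/(8*ℓ) + -(1/(8*ℓ))*v^2 = (-η^2 - v^2)/(8*ℓ) := by field_simp; ring
    rw [e1, e2, div_le_div_iff_of_pos_right h8]
    linarith
  refine step1.trans ?_
  rw [integral_const_mul]
  have step2 : ∫ v in Ioi η, c * Real.exp (-(1/(8*ℓ)) * v ^ 2)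
      ≤ ∫ v in Ioi 0, c * Real.exp (-(1/(8*ℓ)) * v ^ 2) := by
    apply setIntegral_mono_set (((integrable_exp_neg_mul_sq hb).const_mul c).integrableOn)
    · filter_upwards with v
      positivity
    · exact HasSubset.Subset.eventuallyLE (Ioi_subset_Ioi (le_of_lt hη))
  have step3 : ∫ v in Ioi (0:ℝ), c * Real.exp (-(1/(8*ℓ)) * v ^ 2) ≤ 1 := by
    rw [integral_const_mul, integral_gaussian_Ioi]
    have h1 : Real.pi / (1/(8*ℓ)) = 8 * Real.pi * ℓ := by field_simp
    rw [h1, hc_def]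
    have hsq : Real.sqrt (8 * Real.pi * ℓ) ≤ 2 * Real.sqrt (4 * Real.pi * ℓ) := by
      calc Real.sqrt (8 * Real.pi * ℓ) ≤ Real.sqrt (2^2 * (4 * Real.pi * ℓ)) := by
            apply Real.sqrt_le_sqrt; nlinarith [Real.pi_pos]
        _ = 2 * Real.sqrt (4 * Real.pi * ℓ) := by
            rw [Real.sqrt_mul (by norm_num), Real.sqrt_sq (by norm_num : (0:ℝ) ≤ 2)]
    rw [inv_mul_le_iff₀ hc, mul_one, div_le_iff₀ (by norm_num : (0:ℝ) < 2)]
    linarith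
  calc _ ≤ Real.exp (-η ^ 2 / (8 * ℓ)) * 1 := by
        apply mul_le_mul_of_nonneg_left (step2.trans step3) (Real.exp_nonneg _)
    _ = _ := mul_one _

lemma heatKernel_continuous (ℓ : ℝ) : Continuous (heatKernel ℓ) := by
  unfold heatKernel
  fun_prop

/-- Lemma 4.3 (lem:heat2): if the continuous functions `g δ`, `0 < δ ≤ a`, are uniformly
bounded on `[0, ∞)` and converge locally uniformly there, as `δ ↘ 0`, to a continuous
function `g₀`, then `∫_0^∞ p_δ(v) g_δ(v + ε) dv → g₀(0)/2` as `δ ↘ 0`, uniformly over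
`ε ∈ [0, δ^α]`. -/
theorem heat_kernel_pairing_limit
    (a : ℝ) (ha : 0 < a) (α : ℝ) (hα : 0 < α)
    (g : ℝ → ℝ → ℝ) (g₀ : ℝ → ℝ)
    (hcont : ∀ δ ∈ Ioc (0 : ℝ) a, ContinuousOn (g δ) (Ici 0))
    (hbdd : ∃ B : ℝ, ∀ δ ∈ Ioc (0 : ℝ) a, ∀ v ∈ Ici (0 : ℝ), |g δ v| ≤ B)
    (hg₀ : ContinuousOn g₀ (Ici 0))
    (hconv : ∀ R : ℝ, 0 ≤ R →
      TendstoUniformlyOn (fun δ => g δ) g₀ (nhdsWithin 0 (Ioi 0)) (Icc 0 R)) :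
    ∀ ε' : ℝ, 0 < ε' → ∃ δ₀ : ℝ, 0 < δ₀ ∧
      ∀ δ : ℝ, 0 < δ → δ ≤ δ₀ → δ ≤ a →
        ∀ ε : ℝ, 0 ≤ ε → ε ≤ δ ^ α →
          |(∫ v in Ioi (0 : ℝ), heatKernel δ v * g δ (v + ε)) - g₀ 0 / 2| < ε' := by
  obtain ⟨B, hB⟩ := hbdd
  intro ε' hε'
  have hB0 : 0 ≤ B := le_trans (abs_nonneg _) (hB a ⟨ha, le_refl a⟩ 0 self_mem_Ici)
  set M : ℝ := B + |g₀ 0| + 1 with hM_def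
  have hM : 0 < M := by positivity
  -- continuity of g₀ at 0
  have hcw : ContinuousWithinAt g₀ (Ici 0) 0 := hg₀ 0 self_mem_Ici
  rw [Metric.continuousWithinAt_iff] at hcw
  obtain ⟨η₁, hη₁, hη₁'⟩ := hcw (ε'/8) (by linarith)
  set η : ℝ := η₁/3 with hη_def
  have hη : 0 < η := by positivity
  have hg₀near : ∀ u ∈ Icc (0:ℝ) (2*η), |g₀ u - g₀ 0| < ε'/8 := by
    intro u hu
    have hd : dist u 0 < η₁ := by
      rw [Real.dist_eq, sub_zero, abs_of_nonneg hu.1]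
      have := hu.2
      linarith
    have := hη₁' hu.1 hd
    simpa [Real.dist_eq] using this
  -- uniform convergence on [0, 2η]
  have huc := (Metric.tendstoUniformlyOn_iff.mp (hconv (2*η) (by positivity))) (ε'/8)
    (by linarith)
  obtain ⟨δ₁, hδ₁pos, hδ₁sub⟩ := mem_nhdsGT_iff_exists_Ioc_subset.mp huc
  -- δ₂ ensures δ^α ≤ η
  set δ₂ : ℝ := η ^ (1/α) with hδ₂_def
  have hδ₂pos : 0 < δ₂ := Real.rpow_pos_of_pos hη _
  have hδ₂ : ∀ δ : ℝ, 0 < δ → δ ≤ δ₂ → δ ^ α ≤ η := by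
    intro δ hδ hle
    calc δ ^ α ≤ δ₂ ^ α := Real.rpow_le_rpow hδ.le hle hα.le
      _ = η ^ ((1/α) * α) := (Real.rpow_mul hη.le _ _).symm
      _ = η := by
          rw [one_div, inv_mul_cancel₀ (ne_of_gt hα), Real.rpow_one]
  -- δ₃ ensures tail smallness
  set δ₃ : ℝ := ε' * η^2 / (64 * M) with hδ₃_def
  have hδ₃pos : 0 < δ₃ := by positivity
  have htail : ∀ δ : ℝ, 0 < δ → δ ≤ δ₃ → M * Real.exp (-η^2/(8*δ)) ≤ ε'/8 := by
    intro δ hδ hle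
    have hx : (0:ℝ) < η^2/(8*δ) := by positivity
    have h2 : η^2/(8*δ) ≤ Real.exp (η^2/(8*δ)) :=
      le_trans (by linarith) (Real.add_one_le_exp _)
    have h1 : Real.exp (-(η^2/(8*δ))) ≤ 8*δ/η^2 := by
      rw [Real.exp_neg]
      rw [inv_le_comm₀ (Real.exp_pos _) (by positivity)]
      calc (8*δ/η^2)⁻¹ = η^2/(8*δ) := by rw [inv_div]
        _ ≤ Real.exp (η^2/(8*δ)) := h2
    have key : 64*M*δ ≤ ε'*η^2 := by
      have := (le_div_iff₀ (by positivity : (0:ℝ) < 64*M)).mp hle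
      linarith
    have e0 : -η^2/(8*δ) = -(η^2/(8*δ)) := by ring
    rw [e0]
    calc M * Real.exp (-(η^2/(8*δ))) ≤ M * (8*δ/η^2) :=
          mul_le_mul_of_nonneg_left h1 hM.le
      _ = (8*M*δ)/η^2 := by ring
      _ ≤ ε'/8 := by
          rw [div_le_div_iff₀ (by positivity) (by norm_num : (0:ℝ) < 8)]
          nlinarith
  refine ⟨min (min δ₁ δ₂) δ₃, lt_min (lt_min hδ₁pos hδ₂pos) hδ₃pos, ?_⟩
  intro δ hδpos hδle hδa ε hε hεα
  have hδ1 : δ ≤ δ₁ := le_trans hδle (le_trans (min_le_left _ _) (min_le_left _ _))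
  have hδ2 : δ ≤ δ₂ := le_trans hδle (le_trans (min_le_left _ _) (min_le_right _ _))
  have hδ3 : δ ≤ δ₃ := le_trans hδle (min_le_right _ _)
  have hεη : ε ≤ η := le_trans hεα (hδ₂ δ hδpos hδ2)
  have hδIoc : δ ∈ Ioc (0:ℝ) a := ⟨hδpos, hδa⟩
  have hgb : ∀ v ∈ Ici (0:ℝ), |g δ v| ≤ B := hB δ hδIoc
  have hucδ : ∀ x ∈ Icc (0:ℝ) (2*η), dist (g₀ x) (g δ x) < ε'/8 := hδ₁sub ⟨hδpos, hδ1⟩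
  -- integrability facts
  have hp_int : IntegrableOn (heatKernel δ) (Ioi 0) := (heatKernel_integrable hδpos).integrableOn
  have hgε_cont : ContinuousOn (fun v => g δ (v+ε)) (Ici 0) := by
    apply (hcont δ hδIoc).comp ((continuous_id.add continuous_const).continuousOn)
    intro v hv
    have : (0:ℝ) ≤ v := hv
    simp only [mem_Ici]
    exact add_nonneg this hε
  have hf_meas : AEStronglyMeasurable (fun v => heatKernel δ v * g δ (v+ε))
      (volume.restrict (Ioi 0)) := by
    apply ContinuousOn.aestronglyMeasurable ?_ measurableSet_Ioi
    exact ((heatKernel_continuous δ).continuousOn).mul (hgε_cont.mono Ioi_subset_Ici_self)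
  have hf_int : IntegrableOn (fun v => heatKernel δ v * g δ (v+ε)) (Ioi 0) := by
    apply Integrable.mono' (hp_int.const_mul B) hf_meas
    filter_upwards [ae_restrict_mem measurableSet_Ioi] with v hv
    have hv0 : (0:ℝ) < v := hv
    have hpnn := (heatKernel_pos hδpos v).le
    have hgv := hgb (v+ε) (by simp only [mem_Ici]; linarith)
    calc ‖heatKernel δ v * g δ (v+ε)‖ = heatKernel δ v * |g δ (v+ε)| := by
          rw [Real.norm_eq_abs, abs_mul, abs_of_nonneg hpnn]
      _ ≤ heatKernel δ v * B := mul_le_mul_of_nonneg_left hgv hpnn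
      _ = B * heatKernel δ v := mul_comm _ _
  have hfc_int : IntegrableOn (fun v => heatKernel δ v * g₀ 0) (Ioi 0) := hp_int.mul_const _
  -- rewrite difference
  have key : (∫ v in Ioi (0:ℝ), heatKernel δ v * g δ (v + ε)) - g₀ 0 / 2
      = ∫ v in Ioi (0:ℝ), heatKernel δ v * (g δ (v+ε) - g₀ 0) := by
    have e1 : ∫ v in Ioi (0:ℝ), heatKernel δ v * (g δ (v+ε) - g₀ 0)
        = (∫ v in Ioi (0:ℝ), heatKernel δ v * g δ (v+ε))
          - ∫ v in Ioi (0:ℝ), heatKernel δ v * g₀ 0 := by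
      rw [← integral_sub hf_int hfc_int]
      apply setIntegral_congr_fun measurableSet_Ioi
      intro v _
      ring
    rw [e1, integral_mul_const, heatKernel_integral hδpos]
    ring
  rw [key]
  set f : ℝ → ℝ := fun v => heatKernel δ v * (g δ (v+ε) - g₀ 0) with hf_def
  have hf_int' : IntegrableOn f (Ioi 0) := by
    have hsub : IntegrableOn ((fun v => heatKernel δ v * g δ (v+ε))
        - fun v => heatKernel δ v * g₀ 0) (Ioi 0) := hf_int.sub hfc_int
    apply hsub.congr_fun ?_ measurableSet_Ioi
    intro v _
    simp only [f, Pi.sub_apply]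
    ring
  have hfabs : IntegrableOn (fun v => |f v|) (Ioi 0) := hf_int'.abs
  have hpE : IntegrableOn (fun v => (ε'/4) * heatKernel δ v) (Ioi 0) := hp_int.const_mul _
  have hpM : IntegrableOn (fun v => M * heatKernel δ v) (Ioi 0) := hp_int.const_mul M
  have habs : |∫ v in Ioi (0:ℝ), f v| ≤ ∫ v in Ioi (0:ℝ), |f v| := by
    simpa [Real.norm_eq_abs] using
      norm_integral_le_integral_norm (μ := volume.restrict (Ioi 0)) f
  have hsplit : ∫ v in Ioi (0:ℝ), |f v| = (∫ v in Ioc (0:ℝ) η, |f v|) + ∫ v in Ioi η, |f v| := by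
    rw [← setIntegral_union (Ioc_disjoint_Ioi le_rfl) measurableSet_Ioi
      (hfabs.mono_set Ioc_subset_Ioi_self)
      (hfabs.mono_set (Ioi_subset_Ioi hη.le)), Ioc_union_Ioi_eq_Ioi hη.le]
  -- bound on Ioc 0 η
  have hIoc : ∫ v in Ioc (0:ℝ) η, |f v| ≤ ε'/8 := by
    have hb1 : ∫ v in Ioc (0:ℝ) η, |f v| ≤ ∫ v in Ioc (0:ℝ) η, (ε'/4) * heatKernel δ v := by
      apply setIntegral_mono_on (hfabs.mono_set Ioc_subset_Ioi_self)
        (hpE.mono_set Ioc_subset_Ioi_self) measurableSet_Ioc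
      intro v hv
      have hv0 : 0 < v := hv.1
      have hvη : v ≤ η := hv.2
      have hmem : v + ε ∈ Icc (0:ℝ) (2*η) := ⟨by linarith, by linarith⟩
      have h1 : |g δ (v+ε) - g₀ (v+ε)| < ε'/8 := by
        have := hucδ _ hmem
        rw [dist_comm, Real.dist_eq] at this
        exact this
      have h2 : |g₀ (v+ε) - g₀ 0| < ε'/8 := hg₀near _ hmem
      have h3 : |g δ (v+ε) - g₀ 0| ≤ ε'/4 := by
        have := abs_sub_le (g δ (v+ε)) (g₀ (v+ε)) (g₀ 0)
        linarith
      have hpnn := (heatKernel_pos hδpos v).le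
      calc |f v| = heatKernel δ v * |g δ (v+ε) - g₀ 0| := by
            rw [hf_def]; rw [abs_mul, abs_of_nonneg hpnn]
        _ ≤ heatKernel δ v * (ε'/4) := mul_le_mul_of_nonneg_left h3 hpnn
        _ = (ε'/4) * heatKernel δ v := mul_comm _ _
    refine hb1.trans ?_
    rw [integral_const_mul]
    have hle2 : ∫ v in Ioc (0:ℝ) η, heatKernel δ v ≤ ∫ v in Ioi (0:ℝ), heatKernel δ v := by
      apply setIntegral_mono_set hp_int
      · filter_upwards with v using (heatKernel_pos hδpos v).le
      · exact HasSubset.Subset.eventuallyLE Ioc_subset_Ioi_self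
    rw [heatKernel_integral hδpos] at hle2
    calc ε'/4 * ∫ v in Ioc (0:ℝ) η, heatKernel δ v ≤ ε'/4 * (1/2) :=
          mul_le_mul_of_nonneg_left hle2 (by linarith)
      _ = ε'/8 := by ring
  -- bound on Ioi η
  have hIoi : ∫ v in Ioi η, |f v| ≤ ε'/8 := by
    have hb2 : ∫ v in Ioi η, |f v| ≤ ∫ v in Ioi η, M * heatKernel δ v := by
      apply setIntegral_mono_on (hfabs.mono_set (Ioi_subset_Ioi hη.le))
        (hpM.mono_set (Ioi_subset_Ioi hη.le)) measurableSet_Ioi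
      intro v hv
      have hv0 : 0 < v := lt_trans hη hv
      have hpnn := (heatKernel_pos hδpos v).le
      have hgv := hgb (v+ε) (by simp only [mem_Ici]; linarith)
      have h3 : |g δ (v+ε) - g₀ 0| ≤ M := by
        have := abs_sub (g δ (v+ε)) (g₀ 0)
        rw [hM_def]
        have h4 : |g δ (v+ε) - g₀ 0| ≤ |g δ (v+ε)| + |g₀ 0| := abs_sub _ _
        linarith
      calc |f v| = heatKernel δ v * |g δ (v+ε) - g₀ 0| := by
            rw [hf_def]; rw [abs_mul, abs_of_nonneg hpnn]
        _ ≤ heatKernel δ v * M := mul_le_mul_of_nonneg_left h3 hpnn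
        _ = M * heatKernel δ v := mul_comm _ _
    refine hb2.trans ?_
    rw [integral_const_mul]
    calc M * ∫ v in Ioi η, heatKernel δ v ≤ M * Real.exp (-η^2/(8*δ)) :=
          mul_le_mul_of_nonneg_left (heatKernel_tail hδpos hη) hM.le
      _ ≤ ε'/8 := htail δ hδpos hδ3
  calc |∫ v in Ioi (0:ℝ), f v| ≤ ∫ v in Ioi (0:ℝ), |f v| := habs
    _ = (∫ v in Ioc (0:ℝ) η, |f v|) + ∫ v in Ioi η, |f v| := hsplit
    _ ≤ ε'/8 + ε'/8 := add_le_add hIoc hIoi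
    _ < ε' := by linarith
end

section
/- Fix reals M, x₂, L, u₂ with x₂ < L and u₂ > −M. For 0 ≤ δ < L − x₂ define g_δ : ℝ → ℝ by g_δ(v) := p_{L−x₂−δ}(u₂ − v) − p_{L−x₂−δ}(v + u₂ + 2M) for v > −M, and g_δ(v) := 0 for v ≤ −M. Then for every δ₀ ∈ (0, L − x₂): (i) each g_δ with 0 ≤ δ ≤ δ₀ is continuous on ℝ and the family (g_δ)_{0≤δ≤δ₀} is uniformly bounded; (ii) g_δ converges uniformly on ℝ to g_0 as δ ↘ 0; (iii) the restriction of each g_δ to [−M, ∞) is continuously differentiable (derivative taken within [−M,∞)), and these derivatives converge uniformly on [−M, ∞), as δ ↘ 0, to the function v ↦ −p'_{L−x₂}(u₂ − v) − p'_{L−x₂}(v + u₂ + 2M). -/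
/-!
Write `p_s(u) = a(s) e^{-u²/(4s)}` and `p'_s(u) = b(s) u e^{-u²/(4s)}` with `a, b` continuous on
`(0, ∞)`. Since `|eˣ - eʸ| ≤ e^{max(x, y)} |x - y|`, for `0 < s ≤ 2ℓ`
`|uᵏ e^{-u²/(4s)} - uᵏ e^{-u²/(4ℓ)}| ≤ |s⁻¹ - ℓ⁻¹| · sup_u |u|^{k+2} e^{-u²/(8ℓ)} / 4`,
and the supremum is finite, so both `p_s` and `p'_s` converge uniformly on `ℝ` as `s → ℓ`.
The kernel `p_ℓ(u₂ - v) - p_ℓ(v + u₂ + 2M)` vanishes at `v = -M`, so `g_δ` is that smooth kernel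
precomposed with `v ↦ max (-M) v`, and every claim reduces to the smooth kernel.
-/

open Set Filter

open Real Topology

theorem TendstoUniformly.comp_tendsto {ι κ α β : Type*} [UniformSpace β] {F : ι → α → β}
    {f : α → β} {p : Filter ι} {q : Filter κ} (h : TendstoUniformly F f p) {φ : κ → ι}
    (hφ : Tendsto φ q p) : TendstoUniformly (fun k => F (φ k)) f q :=
  fun _ hu => hφ.eventually (h _ hu)

theorem tendstoUniformly_of_abs_sub_le {ι α : Type*} {l : Filter ι} {F : ι → α → ℝ}
    {f : α → ℝ} {B : ι → ℝ} (hB : Tendsto B l (𝓝 0)) (hFB : ∀ᶠ i in l, ∀ x, |f x - F i x| ≤ B i) :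
    TendstoUniformly F f l := by
  rw [Metric.tendstoUniformly_iff]
  intro ε hε
  filter_upwards [hFB, hB.eventually_lt_const hε] with i hi hiε x
  rw [Real.dist_eq]
  exact (hi x).trans_lt hiε

theorem abs_exp_sub_exp_le {a b m : ℝ} (ha : a ≤ m) (hb : b ≤ m) :
    |exp a - exp b| ≤ exp m * |a - b| := by
  wlog hab : a ≤ b generalizing a b
  · rw [abs_sub_comm, abs_sub_comm a]
    exact this hb ha (le_of_not_ge hab)
  have hexp_a : exp a = exp b * exp (-(b - a)) := by rw [← exp_add]; ring_nf
  have hlin : exp b - exp a ≤ exp b * (b - a) := by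
    nlinarith [one_sub_le_exp_neg (b - a), exp_pos b]
  rw [abs_sub_comm, abs_of_nonneg (sub_nonneg.2 (exp_le_exp.2 hab)), abs_sub_comm,
    abs_of_nonneg (sub_nonneg.2 hab)]
  calc exp b - exp a ≤ exp b * (b - a) := hlin
    _ ≤ exp m * (b - a) := by gcongr

theorem exists_abs_pow_mul_exp_neg_sq_div_le (k : ℕ) {c : ℝ} (hc : 0 < c) :
    ∃ C, ∀ u : ℝ, |u| ^ k * exp (-u ^ 2 / c) ≤ C := by
  refine ⟨1 + c ^ k * k.factorial, fun u => ?_⟩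
  set x := u ^ 2 / c with hx
  have hx₀ : 0 ≤ x := by positivity
  have hexp : exp (-u ^ 2 / c) = exp (-x) := by rw [neg_div]
  have hpow : |u| ^ k ≤ 1 + c ^ k * x ^ k := by
    have hcx : c ^ k * x ^ k = |u| ^ (2 * k) := by
      rw [← mul_pow, hx, mul_div_cancel₀ _ hc.ne', pow_mul, sq_abs]
    rcases le_total |u| 1 with h | h
    · linarith [pow_le_one₀ (n := k) (abs_nonneg u) h, pow_nonneg (abs_nonneg u) (2 * k)]
    · linarith [pow_le_pow_right₀ h (show k ≤ 2 * k by omega)]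
  have hfac : x ^ k * exp (-x) ≤ k.factorial := by
    have h := pow_div_factorial_le_exp x hx₀ k
    rw [div_le_iff₀ (by positivity)] at h
    calc x ^ k * exp (-x) ≤ exp x * k.factorial * exp (-x) := by gcongr
      _ = k.factorial := by rw [mul_comm, ← mul_assoc, ← exp_add, neg_add_cancel, exp_zero, one_mul]
  rw [hexp]
  calc |u| ^ k * exp (-x) ≤ (1 + c ^ k * x ^ k) * exp (-x) := by gcongr
    _ = exp (-x) + c ^ k * (x ^ k * exp (-x)) := by ring
    _ ≤ 1 + c ^ k * k.factorial := by gcongr; exact exp_le_one_iff.2 (neg_nonpos.2 hx₀)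

theorem abs_pow_mul_gaussian_sub_le {k : ℕ} {ℓ s C : ℝ} (hs : 0 < s) (hsℓ : s ≤ 2 * ℓ)
    (hC : ∀ u : ℝ, |u| ^ (k + 2) * exp (-u ^ 2 / (8 * ℓ)) ≤ C) (u : ℝ) :
    |u ^ k * exp (-u ^ 2 / (4 * ℓ)) - u ^ k * exp (-u ^ 2 / (4 * s))| ≤ C / 4 * |ℓ⁻¹ - s⁻¹| := by
  have hℓ : 0 < ℓ := by linarith
  have hℓm : -u ^ 2 / (4 * ℓ) ≤ -u ^ 2 / (8 * ℓ) := by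
    simp only [neg_div, neg_le_neg_iff]; gcongr; linarith
  have hsm : -u ^ 2 / (4 * s) ≤ -u ^ 2 / (8 * ℓ) := by
    simp only [neg_div, neg_le_neg_iff]
    exact div_le_div_of_nonneg_left (sq_nonneg u) (by positivity) (by linarith)
  rw [← mul_sub, abs_mul, abs_pow]
  calc |u| ^ k * |exp (-u ^ 2 / (4 * ℓ)) - exp (-u ^ 2 / (4 * s))|
      ≤ |u| ^ k * (exp (-u ^ 2 / (8 * ℓ)) * |-u ^ 2 / (4 * ℓ) - -u ^ 2 / (4 * s)|) := by
        gcongr; exact abs_exp_sub_exp_le hℓm hsm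
    _ = |u| ^ (k + 2) * exp (-u ^ 2 / (8 * ℓ)) / 4 * |ℓ⁻¹ - s⁻¹| := by
        rw [show -u ^ 2 / (4 * ℓ) - -u ^ 2 / (4 * s) = u ^ 2 / 4 * (s⁻¹ - ℓ⁻¹) by ring, abs_mul,
          abs_of_nonneg (by positivity : 0 ≤ u ^ 2 / 4), abs_sub_comm, pow_add, ← sq_abs u]
        ring
    _ ≤ C / 4 * |ℓ⁻¹ - s⁻¹| := by gcongr; exact hC u

theorem tendstoUniformly_mul_pow_mul_gaussian {a : ℝ → ℝ} {ℓ : ℝ} (hℓ : 0 < ℓ)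
    (ha : ContinuousAt a ℓ) (k : ℕ) :
    TendstoUniformly (fun s (u : ℝ) => a s * u ^ k * exp (-u ^ 2 / (4 * s)))
      (fun u => a ℓ * u ^ k * exp (-u ^ 2 / (4 * ℓ))) (𝓝 ℓ) := by
  obtain ⟨C₀, hC₀⟩ := exists_abs_pow_mul_exp_neg_sq_div_le k (c := 4 * ℓ) (by positivity)
  obtain ⟨C₂, hC₂⟩ := exists_abs_pow_mul_exp_neg_sq_div_le (k + 2) (c := 8 * ℓ) (by positivity)
  set B : ℝ → ℝ := fun s => |a ℓ - a s| * C₀ + |a s| * (C₂ / 4 * |ℓ⁻¹ - s⁻¹|) with hB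
  have hBℓ : B ℓ = 0 := by simp [hB]
  have hBc : ContinuousAt B ℓ := by fun_prop (disch := exact hℓ.ne')
  refine tendstoUniformly_of_abs_sub_le (B := B) (hBℓ ▸ hBc.tendsto) ?_
  filter_upwards [Ioo_mem_nhds (half_lt_self hℓ) (lt_two_mul_self hℓ)] with s hs u
  have hdiff := abs_pow_mul_gaussian_sub_le (by linarith [hs.1]) hs.2.le hC₂ u
  calc |a ℓ * u ^ k * exp (-u ^ 2 / (4 * ℓ)) - a s * u ^ k * exp (-u ^ 2 / (4 * s))|
      = |(a ℓ - a s) * (u ^ k * exp (-u ^ 2 / (4 * ℓ)))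
          + a s * (u ^ k * exp (-u ^ 2 / (4 * ℓ)) - u ^ k * exp (-u ^ 2 / (4 * s)))| := by
        ring_nf
    _ ≤ |a ℓ - a s| * (|u| ^ k * exp (-u ^ 2 / (4 * ℓ)))
          + |a s| * |u ^ k * exp (-u ^ 2 / (4 * ℓ)) - u ^ k * exp (-u ^ 2 / (4 * s))| := by
        refine (abs_add_le _ _).trans_eq ?_
        rw [abs_mul, abs_mul, abs_mul, abs_pow, abs_of_pos (exp_pos _)]
    _ ≤ B s := by simp only [hB]; gcongr; exact hC₀ u

noncomputable def heatKernelDeriv (ℓ u : ℝ) : ℝ := -(u / (2 * ℓ)) * heatKernel ℓ u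

theorem hasDerivAt_heatKernel (ℓ u : ℝ) : HasDerivAt (heatKernel ℓ) (heatKernelDeriv ℓ u) u := by
  have h := (((hasDerivAt_pow 2 u).neg.div_const (4 * ℓ)).exp).const_mul (√(4 * π * ℓ))⁻¹
  refine h.congr_deriv ?_
  simp only [heatKernelDeriv, heatKernel, Pi.neg_apply]
  push_cast
  ring

theorem deriv_heatKernel (ℓ : ℝ) : deriv (heatKernel ℓ) = heatKernelDeriv ℓ :=
  funext fun u => (hasDerivAt_heatKernel ℓ u).deriv

theorem heatKernel_nonneg (ℓ u : ℝ) : 0 ≤ heatKernel ℓ u := by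
  unfold heatKernel; positivity

theorem heatKernel_le {ℓ₀ ℓ : ℝ} (hℓ₀ : 0 < ℓ₀) (hℓ : ℓ₀ ≤ ℓ) (u : ℝ) :
    heatKernel ℓ u ≤ (√(4 * π * ℓ₀))⁻¹ := by
  have hexp : exp (-u ^ 2 / (4 * ℓ)) ≤ 1 :=
    exp_le_one_iff.2 (div_nonpos_of_nonpos_of_nonneg (neg_nonpos.2 (sq_nonneg u)) (by linarith))
  calc heatKernel ℓ u ≤ (√(4 * π * ℓ))⁻¹ * 1 := by unfold heatKernel; gcongr
    _ ≤ (√(4 * π * ℓ₀))⁻¹ := by rw [mul_one]; gcongr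

theorem tendstoUniformly_heatKernel {ℓ : ℝ} (hℓ : 0 < ℓ) :
    TendstoUniformly heatKernel (heatKernel ℓ) (𝓝 ℓ) := by
  have h := tendstoUniformly_mul_pow_mul_gaussian hℓ (a := fun s => (√(4 * π * s))⁻¹)
    (by fun_prop (disch := positivity)) 0
  simp only [pow_zero, mul_one] at h
  exact h

theorem tendstoUniformly_heatKernelDeriv {ℓ : ℝ} (hℓ : 0 < ℓ) :
    TendstoUniformly heatKernelDeriv (heatKernelDeriv ℓ) (𝓝 ℓ) := by
  have h : heatKernelDeriv =
      fun s u => -((√(4 * π * s))⁻¹ / (2 * s)) * u ^ 1 * exp (-u ^ 2 / (4 * s)) := by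
    funext s u
    simp only [heatKernelDeriv, heatKernel]
    ring
  rw [h]
  exact tendstoUniformly_mul_pow_mul_gaussian hℓ (by fun_prop (disch := positivity)) 1

section KilledHeatKernel

variable (M u₂ : ℝ)

/-- By the reflection principle, the transition density from `v` to `u₂` in time `ℓ` of the
Brownian motion killed at `-M`. -/
noncomputable def killedHeatKernel (ℓ v : ℝ) : ℝ :=
  heatKernel ℓ (u₂ - v) - heatKernel ℓ (v + u₂ + 2 * M)

noncomputable def killedHeatKernelDeriv (ℓ v : ℝ) : ℝ :=
  -heatKernelDeriv ℓ (u₂ - v) - heatKernelDeriv ℓ (v + u₂ + 2 * M)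

theorem killedHeatKernel_neg_eq_zero (ℓ : ℝ) : killedHeatKernel M u₂ ℓ (-M) = 0 := by
  rw [killedHeatKernel, show -M + u₂ + 2 * M = u₂ - -M by ring, sub_self]

theorem continuous_killedHeatKernel (ℓ : ℝ) : Continuous (killedHeatKernel M u₂ ℓ) := by
  unfold killedHeatKernel heatKernel; fun_prop

theorem continuous_killedHeatKernelDeriv (ℓ : ℝ) : Continuous (killedHeatKernelDeriv M u₂ ℓ) := by
  unfold killedHeatKernelDeriv heatKernelDeriv heatKernel; fun_prop

theorem hasDerivAt_killedHeatKernel (ℓ v : ℝ) :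
    HasDerivAt (killedHeatKernel M u₂ ℓ) (killedHeatKernelDeriv M u₂ ℓ v) v := by
  have h₁ := (hasDerivAt_heatKernel ℓ (u₂ - v)).comp v ((hasDerivAt_id v).const_sub u₂)
  have h₂ := (hasDerivAt_heatKernel ℓ (v + u₂ + 2 * M)).comp v
    (((hasDerivAt_id v).add_const u₂).add_const (2 * M))
  refine (h₁.sub h₂).congr_deriv ?_
  rw [killedHeatKernelDeriv]
  ring

theorem abs_killedHeatKernel_le {ℓ₀ ℓ : ℝ} (hℓ₀ : 0 < ℓ₀) (hℓ : ℓ₀ ≤ ℓ) (v : ℝ) :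
    |killedHeatKernel M u₂ ℓ v| ≤ (√(4 * π * ℓ₀))⁻¹ :=
  abs_sub_le_of_nonneg_of_le (heatKernel_nonneg _ _) (heatKernel_le hℓ₀ hℓ _)
    (heatKernel_nonneg _ _) (heatKernel_le hℓ₀ hℓ _)

theorem tendstoUniformly_killedHeatKernel {ℓ : ℝ} (hℓ : 0 < ℓ) :
    TendstoUniformly (killedHeatKernel M u₂) (killedHeatKernel M u₂ ℓ) (𝓝 ℓ) :=
  ((tendstoUniformly_heatKernel hℓ).comp (u₂ - ·)).fun_sub
    ((tendstoUniformly_heatKernel hℓ).comp (· + u₂ + 2 * M))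

theorem tendstoUniformly_killedHeatKernelDeriv {ℓ : ℝ} (hℓ : 0 < ℓ) :
    TendstoUniformly (killedHeatKernelDeriv M u₂) (killedHeatKernelDeriv M u₂ ℓ) (𝓝 ℓ) :=
  ((tendstoUniformly_heatKernelDeriv hℓ).comp (u₂ - ·)).fun_neg.fun_sub
    ((tendstoUniformly_heatKernelDeriv hℓ).comp (· + u₂ + 2 * M))

end KilledHeatKernel

theorem reflection_kernel_properties_general
    (M x₂ L u₂ : ℝ)
    (g : ℝ → ℝ → ℝ)
    (hg : ∀ δ v, g δ v =
      if -M < v then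
        heatKernel (L - x₂ - δ) (u₂ - v) - heatKernel (L - x₂ - δ) (v + u₂ + 2 * M)
      else 0)
    (δ₀ : ℝ) (hδ₀ : δ₀ ∈ Ioo 0 (L - x₂)) :
    ((∀ δ ∈ Icc (0 : ℝ) δ₀, Continuous (g δ)) ∧
        ∃ B : ℝ, ∀ δ ∈ Icc (0 : ℝ) δ₀, ∀ v : ℝ, |g δ v| ≤ B) ∧
      TendstoUniformly (fun δ => g δ) (g 0) (nhdsWithin 0 (Ioi 0)) ∧
      ∃ g' : ℝ → ℝ → ℝ,
        (∀ δ ∈ Icc (0 : ℝ) δ₀, ∀ v ∈ Ici (-M),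
          HasDerivWithinAt (g δ) (g' δ v) (Ici (-M)) v) ∧
        (∀ δ ∈ Icc (0 : ℝ) δ₀, ContinuousOn (g' δ) (Ici (-M))) ∧
        TendstoUniformlyOn (fun δ => g' δ)
          (fun v => -deriv (heatKernel (L - x₂)) (u₂ - v)
            - deriv (heatKernel (L - x₂)) (v + u₂ + 2 * M))
          (nhdsWithin 0 (Ioi 0)) (Ici (-M)) := by
  have hℓ : 0 < L - x₂ := hδ₀.1.trans hδ₀.2
  have hg_eq : ∀ δ, g δ = fun v => killedHeatKernel M u₂ (L - x₂ - δ) (max (-M) v) := by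
    intro δ
    funext v
    rw [hg]
    split_ifs with hv
    · rw [max_eq_right hv.le]; rfl
    · rw [max_eq_left (not_lt.1 hv), killedHeatKernel_neg_eq_zero]
  have hℓδ : Tendsto (fun δ => L - x₂ - δ) (𝓝[>] 0) (𝓝 (L - x₂)) :=
    tendsto_nhdsWithin_of_tendsto_nhds
      (by simpa using (tendsto_id (x := 𝓝 (0 : ℝ))).const_sub (L - x₂))
  refine ⟨⟨fun δ _ => ?_, (√(4 * π * (L - x₂ - δ₀)))⁻¹, fun δ hδ v => ?_⟩, ?_,
    fun δ => killedHeatKernelDeriv M u₂ (L - x₂ - δ), fun δ _ v hv => ?_,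
    fun δ _ => (continuous_killedHeatKernelDeriv M u₂ _).continuousOn, ?_⟩
  · rw [hg_eq]
    exact (continuous_killedHeatKernel M u₂ _).comp (continuous_const.max continuous_id)
  · rw [hg_eq]
    exact abs_killedHeatKernel_le M u₂ (sub_pos.2 hδ₀.2) (by linarith [hδ.2]) _
  · simp only [hg_eq, sub_zero]
    exact ((tendstoUniformly_killedHeatKernel M u₂ hℓ).comp_tendsto hℓδ).comp (max (-M))
  · refine (hasDerivAt_killedHeatKernel M u₂ _ v).hasDerivWithinAt.congr_of_mem (fun y hy => ?_) hv
    rw [hg_eq]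
    exact congrArg _ (max_eq_right hy)
  · rw [deriv_heatKernel]
    exact ((tendstoUniformly_killedHeatKernelDeriv M u₂ hℓ).comp_tendsto hℓδ).tendstoUniformlyOn

/-- The Gaussian part of Lemma 4.4 (lem:f_g): the reflection-principle functions
`g_δ(v) = p_{L-x₂-δ}(u₂-v) - p_{L-x₂-δ}(v+u₂+2M)` for `v > -M`, `g_δ(v) = 0` for
`v ≤ -M`, are continuous and uniformly bounded, converge uniformly to `g₀` as `δ ↘ 0`,
and on `[-M, ∞)` are continuously differentiable with derivatives converging uniformly,
as `δ ↘ 0`, to `v ↦ -p'_{L-x₂}(u₂-v) - p'_{L-x₂}(v+u₂+2M)`. -/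
theorem reflection_kernel_properties
    (M x₂ L u₂ : ℝ) (hx : x₂ < L) (hu : -M < u₂)
    (g : ℝ → ℝ → ℝ)
    (hg : ∀ δ v, g δ v =
      if -M < v then
        heatKernel (L - x₂ - δ) (u₂ - v) - heatKernel (L - x₂ - δ) (v + u₂ + 2 * M)
      else 0)
    (δ₀ : ℝ) (hδ₀ : δ₀ ∈ Ioo 0 (L - x₂)) :
    ((∀ δ ∈ Icc (0 : ℝ) δ₀, Continuous (g δ)) ∧
        ∃ B : ℝ, ∀ δ ∈ Icc (0 : ℝ) δ₀, ∀ v : ℝ, |g δ v| ≤ B) ∧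
      TendstoUniformly (fun δ => g δ) (g 0) (nhdsWithin 0 (Ioi 0)) ∧
      ∃ g' : ℝ → ℝ → ℝ,
        (∀ δ ∈ Icc (0 : ℝ) δ₀, ∀ v ∈ Ici (-M),
          HasDerivWithinAt (g δ) (g' δ v) (Ici (-M)) v) ∧
        (∀ δ ∈ Icc (0 : ℝ) δ₀, ContinuousOn (g' δ) (Ici (-M))) ∧
        TendstoUniformlyOn (fun δ => g' δ)
          (fun v => -deriv (heatKernel (L - x₂)) (u₂ - v)
            - deriv (heatKernel (L - x₂)) (v + u₂ + 2 * M))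
          (nhdsWithin 0 (Ioi 0)) (Ici (-M)) :=
  reflection_kernel_properties_general M x₂ L u₂ g hg δ₀ hδ₀
end

section
/- Fix r > 0, m ∈ ℝ and σ² > 0, and let μ be the Gaussian measure on ℝ with mean m and variance σ². Then the function s ↦ μ([s − r, s]) / μ((−∞, s]) is strictly decreasing on ℝ: for all reals s₁ < s₂ one has μ([s₂ − r, s₂]) / μ((−∞, s₂]) < μ([s₁ − r, s₁]) / μ((−∞, s₁]). -/
/-!
The ratio equals `1 - Φ(s - r) / Φ(s)` with `Φ` the Gaussian CDF, so it suffices that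
`Φ(a - r) Φ(b) < Φ(b - r) Φ(a)` for `a < b`. The density `φ` is strictly log-concave, which
in shifted form reads `φ(u - r) φ(v) < φ(u) φ(v - r)` for `u < v`. Integrating over `u ≤ a`
gives `Φ(a - r) φ(v) < Φ(a) φ(v - r)` for `v > a`, and integrating that over `v ∈ (a, b]`
gives the product inequality, since `Φ(b) - Φ(a) = ∫_a^b φ` and
`Φ(b - r) - Φ(a - r) = ∫_a^b φ(v - r) dv`.
-/

open MeasureTheory ProbabilityTheory Set Real

lemma setIntegral_pos_of_forall_pos {X : Type*} [MeasurableSpace X] {μ : Measure X} {s : Set X}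
    {f : X → ℝ} (hs : MeasurableSet s) (hμs : μ s ≠ 0) (hf : IntegrableOn f s μ)
    (hpos : ∀ x ∈ s, 0 < f x) : 0 < ∫ x in s, f x ∂μ := by
  rw [setIntegral_pos_iff_support_of_nonneg_ae
      ((ae_restrict_iff' hs).2 (ae_of_all _ fun x hx => (hpos x hx).le)) hf,
    inter_eq_self_of_subset_right (s := Function.support f) fun x hx => (hpos x hx).ne']
  exact pos_iff_ne_zero.2 hμs

lemma integral_Iic_comp_sub_right (f : ℝ → ℝ) (a r : ℝ) :
    ∫ x in Iic a, f (x - r) = ∫ x in Iic (a - r), f x := by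
  simpa using (measurePreserving_sub_right volume r).setIntegral_preimage_emb
    (measurableEmbedding_subRight r) f (Iic (a - r))

section ShiftedMass

variable {f : ℝ → ℝ} {r : ℝ}

lemma integral_Iic_sub_mul_lt_mul_integral_Iic (hf : Integrable f)
    (hshift : ∀ u v, u < v → f (u - r) * f v < f u * f (v - r)) {a v : ℝ} (hav : a < v) :
    (∫ x in Iic (a - r), f x) * f v < (∫ x in Iic a, f x) * f (v - r) := by
  rw [← integral_Iic_comp_sub_right, ← integral_mul_const, ← integral_mul_const, ← sub_pos,
    ← integral_sub (hf.mul_const _).integrableOn ((hf.comp_sub_right r).mul_const _).integrableOn]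
  refine setIntegral_pos_of_forall_pos measurableSet_Iic (by simp)
    (((hf.mul_const _).sub ((hf.comp_sub_right r).mul_const _)).integrableOn) fun u hu => ?_
  exact sub_pos.2 (hshift u v (lt_of_le_of_lt hu hav))

theorem integral_Iic_sub_mul_integral_Iic_lt (hf : Integrable f)
    (hshift : ∀ u v, u < v → f (u - r) * f v < f u * f (v - r)) {a b : ℝ} (hab : a < b) :
    (∫ x in Iic (a - r), f x) * ∫ x in Iic b, f x
      < (∫ x in Iic (b - r), f x) * ∫ x in Iic a, f x := by
  set F := fun s => ∫ x in Iic s, f x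
  have hsplit (c d : ℝ) : F d - F c = ∫ x in c..d, f x :=
    intervalIntegral.integral_Iic_sub_Iic hf.integrableOn hf.integrableOn
  have hgain : 0 < ∫ v in a..b, (F a * f (v - r) - F (a - r) * f v) :=
    intervalIntegral.intervalIntegral_pos_of_pos_on
      (((hf.comp_sub_right r).const_mul _).sub (hf.const_mul _)).intervalIntegrable
      (fun v hv => sub_pos.2 (integral_Iic_sub_mul_lt_mul_integral_Iic hf hshift hv.1)) hab
  rw [intervalIntegral.integral_sub (((hf.comp_sub_right r).const_mul _).intervalIntegrable)
      ((hf.const_mul _).intervalIntegrable), intervalIntegral.integral_const_mul,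
    intervalIntegral.integral_const_mul, intervalIntegral.integral_comp_sub_right,
    ← hsplit, ← hsplit] at hgain
  linarith

end ShiftedMass

section Gaussian

variable {m : ℝ} {σsq : NNReal}

lemma gaussianPDFReal_sub_mul_lt (hσ : σsq ≠ 0) {r u v : ℝ} (hr : 0 < r) (huv : u < v) :
    gaussianPDFReal m σsq (u - r) * gaussianPDFReal m σsq v
      < gaussianPDFReal m σsq u * gaussianPDFReal m σsq (v - r) := by
  have hσ' : (0 : ℝ) < σsq := NNReal.coe_pos.2 (pos_iff_ne_zero.2 hσ)
  simp only [gaussianPDFReal_def, mul_mul_mul_comm _ (rexp _), ← exp_add, ← add_div]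
  refine mul_lt_mul_of_pos_left (exp_lt_exp.2 ?_) (by positivity)
  rw [div_lt_div_iff_of_pos_right (by positivity)]
  nlinarith [mul_pos hr (sub_pos.2 huv)]

lemma gaussianReal_toReal_apply (hσ : σsq ≠ 0) (s : Set ℝ) :
    (gaussianReal m σsq s).toReal = ∫ x in s, gaussianPDFReal m σsq x := by
  rw [gaussianReal_apply_eq_integral m hσ, ENNReal.toReal_ofReal
    (setIntegral_nonneg_of_ae (ae_of_all _ fun x => gaussianPDFReal_nonneg m σsq x))]

lemma gaussianReal_toReal_Iic_pos (hσ : σsq ≠ 0) (s : ℝ) :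
    0 < (gaussianReal m σsq (Iic s)).toReal :=
  ENNReal.toReal_pos
    (fun h => by simpa using gaussianReal_absolutelyContinuous' m hσ h) (measure_ne_top _ _)

lemma gaussianReal_toReal_Icc (hσ : σsq ≠ 0) {a b : ℝ} (hab : a ≤ b) :
    (gaussianReal m σsq (Icc a b)).toReal
      = (gaussianReal m σsq (Iic b)).toReal - (gaussianReal m σsq (Iic a)).toReal := by
  simp only [gaussianReal_toReal_apply hσ]
  rw [integral_Icc_eq_integral_Ioc, ← intervalIntegral.integral_of_le hab,
    intervalIntegral.integral_Iic_sub_Iic (integrable_gaussianPDFReal m σsq).integrableOn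
      (integrable_gaussianPDFReal m σsq).integrableOn]

end Gaussian

/-- Lemma 5.16 (l.normal monotonicity): for a normal random variable `X` with mean `m`
and variance `σ² > 0` and fixed `r > 0`, the conditional probability
`P(X ≥ s - r | X ≤ s)`, i.e. the ratio `μ([s - r, s]) / μ((-∞, s])` for the Gaussian
measure `μ`, is strictly decreasing in `s`. -/
theorem gaussian_conditional_ratio_strictly_decreasing
    (r : ℝ) (hr : 0 < r) (m : ℝ) (σsq : NNReal) (hσ : 0 < σsq) :
    ∀ s₁ s₂ : ℝ, s₁ < s₂ →
      ((gaussianReal m σsq) (Icc (s₂ - r) s₂)).toReal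
          / ((gaussianReal m σsq) (Iic s₂)).toReal
        < ((gaussianReal m σsq) (Icc (s₁ - r) s₁)).toReal
          / ((gaussianReal m σsq) (Iic s₁)).toReal := by
  intro s₁ s₂ h12
  have hσ0 : σsq ≠ 0 := hσ.ne'
  have hkey :
      (gaussianReal m σsq (Iic (s₁ - r))).toReal * (gaussianReal m σsq (Iic s₂)).toReal
        < (gaussianReal m σsq (Iic (s₂ - r))).toReal
          * (gaussianReal m σsq (Iic s₁)).toReal := by
    simp only [gaussianReal_toReal_apply hσ0]
    exact integral_Iic_sub_mul_integral_Iic_lt (integrable_gaussianPDFReal m σsq)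
      (fun _ _ huv => gaussianPDFReal_sub_mul_lt hσ0 hr huv) h12
  rw [gaussianReal_toReal_Icc hσ0 (by linarith), gaussianReal_toReal_Icc hσ0 (by linarith),
    div_lt_div_iff₀ (gaussianReal_toReal_Iic_pos hσ0 s₂)
      (gaussianReal_toReal_Iic_pos hσ0 s₁)]
  linarith
end

section
/- Let n ≥ 1, let f = (f₁, …, f_n) be an environment on n lines, let 0 ≤ a ≤ b, and let φ : [0,∞) → [0,1] be continuous with φ(u) = 0 for all u ∉ (a, b). For z ∈ ℝ let f^z be the environment whose top line is f₁ + z·φ and whose lines 2, …, n equal those of f. Then: (i) for every 0 ≤ y ≤ x and every upright path γ from (y,n) to (x,1) with jump time t₁ onto line 1, one has f^z[γ] = f[γ] + z·(φ(x) − φ(t₁)); in particular z ↦ f^z[γ] is either non-increasing on ℝ, or constant, or non-decreasing; (ii) if x ≤ a then f^z[(y,n)→(x,1)] = f[(y,n)→(x,1)] for every z ∈ ℝ; (iii) if x ≥ b then z ↦ f^z[(y,n)→(x,1)] is non-increasing on ℝ. -/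
open Set

/-- Jump times of an upright path from `(y, n)` to `(x, 1)` in an `n`-line environment:
`t 0 = x`, `t (Fin.last n) = y`, and the jump times are non-increasing. -/
def IsJumpTimes (n : ℕ) (y x : ℝ) (t : Fin (n + 1) → ℝ) : Prop :=
  t (Fin.last n) = y ∧ t 0 = x ∧ ∀ i : Fin n, t i.succ ≤ t i.castSucc

/-- The weight of the upright path with jump times `t` in the environment `f`. -/
def pathWeight (n : ℕ) (f : Fin n → ℝ → ℝ) (t : Fin (n + 1) → ℝ) : ℝ :=
  ∑ i : Fin n, (f i (t i.castSucc) - f i (t i.succ))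

/-- The last passage value from `(y, n)` to `(x, 1)` in the environment `f`. -/
noncomputable def lpp (n : ℕ) (f : Fin n → ℝ → ℝ) (y x : ℝ) : ℝ :=
  sSup {w : ℝ | ∃ t : Fin (n + 1) → ℝ, IsJumpTimes n y x t ∧ pathWeight n f t = w}

/-- All jump times lie in `[y, x]`. -/
lemma jump_mem_Icc {n : ℕ} {y x : ℝ} {t : Fin (n + 1) → ℝ}
    (h : IsJumpTimes n y x t) : ∀ i, t i ∈ Icc y x := by
  obtain ⟨hy, hx, hm⟩ := h
  have hA : Antitone t := Fin.antitone_iff_succ_le.2 hm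
  intro i
  exact ⟨hy ▸ hA (Fin.le_last i), hx ▸ hA (Fin.zero_le i)⟩

/-- Key identity: perturbing the top line changes a path weight by
`z * (φ (t 0) - φ (t 1))`. -/
lemma pathWeight_perturb {n : ℕ} (f : Fin (n + 1) → ℝ → ℝ) (φ : ℝ → ℝ)
    (fz : ℝ → Fin (n + 1) → ℝ → ℝ)
    (hfz : ∀ z i u, fz z i u = if i = 0 then f i u + z * φ u else f i u)
    (z : ℝ) (t : Fin (n + 2) → ℝ) :
    pathWeight (n + 1) (fz z) t = pathWeight (n + 1) f t + z * (φ (t 0) - φ (t 1)) := by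
  unfold pathWeight
  rw [Fin.sum_univ_succ, Fin.sum_univ_succ]
  have h0 : ∀ u, fz z 0 u = f 0 u + z * φ u := by
    intro u; rw [hfz, if_pos rfl]
  have hs : ∀ (i : Fin n) u, fz z i.succ u = f i.succ u := by
    intro i u; rw [hfz, if_neg (Fin.succ_ne_zero i)]
  simp only [h0, hs, Fin.castSucc_zero, Fin.succ_zero_eq_one]
  ring

/-- The set of path weights is nonempty when `y ≤ x`. -/
lemma lpp_set_nonempty {n : ℕ} (g : Fin (n + 1) → ℝ → ℝ) (y x : ℝ) (hyx : y ≤ x) :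
    Set.Nonempty {w : ℝ | ∃ t : Fin (n + 2) → ℝ,
      IsJumpTimes (n + 1) y x t ∧ pathWeight (n + 1) g t = w} := by
  refine ⟨_, fun i => if i = 0 then x else y, ⟨?_, ?_, ?_⟩, rfl⟩
  · have : (Fin.last (n + 1) : Fin (n + 2)) ≠ 0 := by
      simp [Fin.ext_iff, Fin.last]
    simp [this]
  · simp
  · intro i
    simp only
    rw [if_neg (Fin.succ_ne_zero i)]
    split_ifs with h
    · exact hyx
    · exact le_refl y

/-- The set of path weights is bounded above for a continuous environment. -/
lemma lpp_set_bddAbove {n : ℕ} (g : Fin (n + 1) → ℝ → ℝ)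
    (hg : ∀ i, ContinuousOn (g i) (Ici 0)) (y x : ℝ) (hy : 0 ≤ y) :
    BddAbove {w : ℝ | ∃ t : Fin (n + 2) → ℝ,
      IsJumpTimes (n + 1) y x t ∧ pathWeight (n + 1) g t = w} := by
  have hsub : Icc y x ⊆ Ici 0 := fun u hu => le_trans hy hu.1
  have hbd : ∀ i : Fin (n + 1), ∃ C, ∀ u ∈ Icc y x, |g i u| ≤ C := by
    intro i
    obtain ⟨C, hC⟩ := (isCompact_Icc (a := y) (b := x)).exists_bound_of_continuousOn
      ((hg i).mono hsub)
    exact ⟨C, fun u hu => by simpa using hC u hu⟩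
  choose C hC using hbd
  refine ⟨∑ i : Fin (n + 1), 2 * C i, ?_⟩
  rintro w ⟨t, ht, rfl⟩
  have hmem := jump_mem_Icc ht
  unfold pathWeight
  refine Finset.sum_le_sum fun i _ => ?_
  have h1 := abs_le.1 (hC i _ (hmem i.castSucc))
  have h2 := abs_le.1 (hC i _ (hmem i.succ))
  linarith [h1.2, h2.1]

/-- The deterministic core of Lemma 5.10 (l.monotonicity of L^f): perturbing the top
line of an environment by `z · φ`, where `φ : [0,∞) → [0,1]` is a continuous tent
function vanishing outside `(a, b)`, changes the weight of an upright path ending at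
`x` with jump time `t₁` onto the top line by exactly `z (φ(x) - φ(t₁))`; in particular
the weight of each path is monotone (non-increasing, constant or non-decreasing) in
`z`, last passage values to endpoints `x ≤ a` are unchanged, and last passage values to
endpoints `x ≥ b` are non-increasing in `z`. -/
theorem resampled_environment_monotonicity (n : ℕ) (f : Fin (n + 1) → ℝ → ℝ)
    (hf : ∀ i, ContinuousOn (f i) (Ici 0))
    (a b : ℝ) (ha : 0 ≤ a) (hab : a ≤ b)
    (φ : ℝ → ℝ) (hφc : ContinuousOn φ (Ici 0))
    (hφ01 : ∀ u : ℝ, 0 ≤ u → φ u ∈ Icc (0 : ℝ) 1)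
    (hφ0 : ∀ u : ℝ, 0 ≤ u → u ∉ Ioo a b → φ u = 0)
    (fz : ℝ → Fin (n + 1) → ℝ → ℝ)
    (hfz : ∀ z i u, fz z i u = if i = 0 then f i u + z * φ u else f i u) :
    (∀ y x : ℝ, 0 ≤ y → y ≤ x → ∀ t : Fin (n + 2) → ℝ, IsJumpTimes (n + 1) y x t →
        (∀ z : ℝ, pathWeight (n + 1) (fz z) t
            = pathWeight (n + 1) f t + z * (φ x - φ (t 1))) ∧
          (Antitone (fun z => pathWeight (n + 1) (fz z) t) ∨
            (∃ w : ℝ, ∀ z : ℝ, pathWeight (n + 1) (fz z) t = w) ∨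
            Monotone (fun z => pathWeight (n + 1) (fz z) t))) ∧
      (∀ y x : ℝ, 0 ≤ y → y ≤ x → x ≤ a →
        ∀ z : ℝ, lpp (n + 1) (fz z) y x = lpp (n + 1) f y x) ∧
      (∀ y x : ℝ, 0 ≤ y → y ≤ x → b ≤ x →
        Antitone (fun z => lpp (n + 1) (fz z) y x)) := by
  have hfzc : ∀ z i, ContinuousOn (fz z i) (Ici 0) := by
    intro z i
    have he : fz z i = fun u => if i = 0 then f i u + z * φ u else f i u :=
      funext (hfz z i)
    rw [he]
    by_cases h : i = 0
    · subst h
      simp only [if_pos rfl]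
      exact (hf 0).add (continuousOn_const.mul hφc)
    · simp only [if_neg h]
      exact hf i
  refine ⟨?_, ?_, ?_⟩
  · -- part (i)
    intro y x hy hyx t ht
    have key : ∀ z : ℝ, pathWeight (n + 1) (fz z) t
        = pathWeight (n + 1) f t + z * (φ x - φ (t 1)) := by
      intro z
      rw [pathWeight_perturb f φ fz hfz z t, ht.2.1]
    refine ⟨key, ?_⟩
    rcases lt_trichotomy (φ x - φ (t 1)) 0 with h | h | h
    · left
      intro z1 z2 hz
      simp only [key]
      nlinarith
    · right; left
      exact ⟨pathWeight (n + 1) f t, fun z => by rw [key, h]; ring⟩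
    · right; right
      intro z1 z2 hz
      simp only [key]
      nlinarith
  · -- part (ii)
    intro y x hy hyx hxa z
    have hset : ∀ t : Fin (n + 2) → ℝ, IsJumpTimes (n + 1) y x t →
        pathWeight (n + 1) (fz z) t = pathWeight (n + 1) f t := by
      intro t ht
      have h1 := jump_mem_Icc ht 1
      have hφ1 : φ (t 1) = 0 := hφ0 _ (hy.trans h1.1)
        (by rintro ⟨p, q⟩; linarith [h1.2])
      have hφx : φ x = 0 := hφ0 _ (hy.trans hyx) (by rintro ⟨p, q⟩; linarith)
      rw [pathWeight_perturb f φ fz hfz z t, ht.2.1, hφx, hφ1]; ring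
    unfold lpp
    congr 1
    ext w
    constructor
    · rintro ⟨t, ht, rfl⟩; exact ⟨t, ht, (hset t ht).symm⟩
    · rintro ⟨t, ht, rfl⟩; exact ⟨t, ht, hset t ht⟩
  · -- part (iii)
    intro y x hy hyx hbx z1 z2 hz
    simp only
    unfold lpp
    have hbdd := lpp_set_bddAbove (fz z1) (hfzc z1) y x hy
    obtain ⟨w0, hw0⟩ := lpp_set_nonempty (fz z2) y x hyx
    refine csSup_le ⟨w0, hw0⟩ ?_
    rintro w ⟨t, ht, rfl⟩
    have hφx : φ x = 0 := hφ0 _ (hy.trans hyx) (by rintro ⟨p, q⟩; linarith)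
    have h1 := jump_mem_Icc ht 1
    have hφ1 : 0 ≤ φ (t 1) := (hφ01 _ (hy.trans h1.1)).1
    have hle : pathWeight (n + 1) (fz z2) t ≤ pathWeight (n + 1) (fz z1) t := by
      rw [pathWeight_perturb f φ fz hfz z2 t, pathWeight_perturb f φ fz hfz z1 t,
        ht.2.1, hφx]
      nlinarith
    exact hle.trans (le_csSup hbdd ⟨t, ht, rfl⟩)
end

section
/- Let n ≥ 1, let f = (f₁, …, f_n) be an environment on n lines, let φ : [0,∞) → [0,1] be continuous, let Y ≥ 0, and let h₀ : [0,Y] → ℝ be bounded above. For z ∈ ℝ let f^z be the environment whose top line is f₁ + z·φ and whose lines 2, …, n equal those of f, and define h^z(x) := sup_{0 ≤ y ≤ min(Y,x)} ( h₀(y) + f^z[(y,n)→(x,1)] ) for x ≥ 0. Then for all z₁, z₂ ∈ ℝ: (i) |h^{z₁}(x) − h^{z₂}(x)| ≤ 2·|z₁ − z₂| for every x ≥ 0; and (ii) for every 0 ≤ c ≤ d, |sup_{x ∈ [c,d]} h^{z₁}(x) − sup_{x ∈ [c,d]} h^{z₂}(x)| ≤ 2·|z₁ − z₂|. -/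
open Set

/-- The height function over the environment `f` with initial data `h₀` on `[0, Y]`:
`h(x) = sup_{0 ≤ y ≤ min(Y, x)} (h₀(y) + f[(y,n) → (x,1)])`. -/
noncomputable def heightFn (n : ℕ) (f : Fin n → ℝ → ℝ) (Y : ℝ) (h₀ : ℝ → ℝ)
    (x : ℝ) : ℝ :=
  sSup {w : ℝ | ∃ y : ℝ, 0 ≤ y ∧ y ≤ min Y x ∧ w = h₀ y + lpp n f y x}

/-! Perturbing the top line by `z φ` changes the weight of a path with jump times `t` by
`z (φ (t 0) - φ (t 1))`, which is at most `|z|` in absolute value because `φ` takes values in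
`[0, 1]`. Moving every member of a family of reals by at most `ε` moves its supremum by at most
`ε`, so the bound survives the three suprema: over paths, over starting points `y`, and over the
window `[c, d]`. This gives the constant `1`, better than `2`. -/

section SupPerturbation

variable {S T : Set ℝ} {ε : ℝ}

lemma csSup_le_csSup_add_of_forall_exists_le (hS : S.Nonempty) (hT : BddAbove T)
    (h : ∀ a ∈ S, ∃ b ∈ T, a ≤ b + ε) : sSup S ≤ sSup T + ε :=
  csSup_le hS fun a ha => by
    obtain ⟨b, hb, hab⟩ := h a ha
    linarith [le_csSup hT hb]

lemma BddAbove.of_forall_exists_le (hT : BddAbove T) (h : ∀ a ∈ S, ∃ b ∈ T, a ≤ b + ε) :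
    BddAbove S := by
  obtain ⟨M, hM⟩ := hT
  refine ⟨M + ε, fun a ha => ?_⟩
  obtain ⟨b, hb, hab⟩ := h a ha
  linarith [hM hb]

/-- The hypotheses force `S` and `T` to be empty together and bounded above together; in the
degenerate cases both suprema are the junk value `0`. -/
lemma abs_sSup_sub_sSup_le_of_forall_exists_le (hε : 0 ≤ ε)
    (hST : ∀ a ∈ S, ∃ b ∈ T, a ≤ b + ε) (hTS : ∀ b ∈ T, ∃ a ∈ S, b ≤ a + ε) :
    |sSup S - sSup T| ≤ ε := by
  rcases S.eq_empty_or_nonempty with rfl | hS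
  · have hT : T = ∅ := eq_empty_of_forall_notMem fun b hb => by
      obtain ⟨a, ha, -⟩ := hTS b hb
      exact ha
    simpa [hT] using hε
  have hT : T.Nonempty := by
    obtain ⟨a, ha⟩ := hS
    obtain ⟨b, hb, -⟩ := hST a ha
    exact ⟨b, hb⟩
  by_cases hTb : BddAbove T
  · have hSb := hTb.of_forall_exists_le hST
    rw [abs_sub_le_iff]
    constructor
    · linarith [csSup_le_csSup_add_of_forall_exists_le hS hTb hST]
    · linarith [csSup_le_csSup_add_of_forall_exists_le hT hSb hTS]
  · have hSb : ¬BddAbove S := fun hSb => hTb (hSb.of_forall_exists_le hTS)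
    simpa [Real.sSup_of_not_bddAbove hSb, Real.sSup_of_not_bddAbove hTb] using hε

lemma abs_sSup_image_sub_sSup_image_le {α : Type*} {s : Set α} {u v : α → ℝ} (hε : 0 ≤ ε)
    (huv : ∀ x ∈ s, |u x - v x| ≤ ε) : |sSup (u '' s) - sSup (v '' s)| ≤ ε := by
  refine abs_sSup_sub_sSup_le_of_forall_exists_le hε ?_ ?_
  · rintro _ ⟨x, hx, rfl⟩
    exact ⟨v x, mem_image_of_mem v hx, by linarith [(abs_le.mp (huv x hx)).2]⟩
  · rintro _ ⟨x, hx, rfl⟩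
    exact ⟨u x, mem_image_of_mem u hx, by linarith [(abs_le.mp (huv x hx)).1]⟩

end SupPerturbation

lemma IsJumpTimes.le_apply {n : ℕ} {y x : ℝ} {t : Fin (n + 1) → ℝ} (ht : IsJumpTimes n y x t)
    (k : Fin (n + 1)) : y ≤ t k :=
  ht.1 ▸ Fin.antitone_iff_succ_le.mpr ht.2.2 (Fin.le_last k)

lemma heightFn_eq_sSup_image (n : ℕ) (f : Fin n → ℝ → ℝ) (Y : ℝ) (h₀ : ℝ → ℝ) (x : ℝ) :
    heightFn n f Y h₀ x = sSup ((fun y => h₀ y + lpp n f y x) '' Icc 0 (min Y x)) := by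
  simp only [heightFn, image, mem_Icc, and_assoc, eq_comm]

section TopLinePerturbation

variable {n : ℕ} {f g : Fin (n + 1) → ℝ → ℝ} {ε : ℝ}

lemma pathWeight_sub_pathWeight_of_forall_ne_zero (hfg : ∀ i ≠ 0, f i = g i)
    (t : Fin (n + 2) → ℝ) :
    pathWeight (n + 1) f t - pathWeight (n + 1) g t =
      (f 0 (t 0) - g 0 (t 0)) - (f 0 (t 1) - g 0 (t 1)) := by
  unfold pathWeight
  rw [← Finset.sum_sub_distrib, Finset.sum_eq_single 0]
  · simp only [Fin.castSucc_zero, Fin.succ_zero_eq_one]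
    ring
  · intro i _ hi
    simp [hfg i hi]
  · simp

variable (hfg : ∀ i ≠ 0, f i = g i)
include hfg

lemma abs_pathWeight_sub_pathWeight_le {y x : ℝ}
    (hosc : ∀ u ∈ Ici y, ∀ v ∈ Ici y, |(f 0 u - g 0 u) - (f 0 v - g 0 v)| ≤ ε)
    {t : Fin (n + 2) → ℝ} (ht : IsJumpTimes (n + 1) y x t) :
    |pathWeight (n + 1) f t - pathWeight (n + 1) g t| ≤ ε := by
  rw [pathWeight_sub_pathWeight_of_forall_ne_zero hfg]
  exact hosc _ (ht.le_apply 0) _ (ht.le_apply 1)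

lemma abs_lpp_sub_lpp_le (hε : 0 ≤ ε) {y : ℝ}
    (hosc : ∀ u ∈ Ici y, ∀ v ∈ Ici y, |(f 0 u - g 0 u) - (f 0 v - g 0 v)| ≤ ε) (x : ℝ) :
    |lpp (n + 1) f y x - lpp (n + 1) g y x| ≤ ε :=
  abs_sSup_image_sub_sSup_image_le hε fun _ ht => abs_pathWeight_sub_pathWeight_le hfg hosc ht

lemma abs_heightFn_sub_heightFn_le (hε : 0 ≤ ε)
    (hosc : ∀ u ∈ Ici 0, ∀ v ∈ Ici 0, |(f 0 u - g 0 u) - (f 0 v - g 0 v)| ≤ ε)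
    (Y : ℝ) (h₀ : ℝ → ℝ) (x : ℝ) :
    |heightFn (n + 1) f Y h₀ x - heightFn (n + 1) g Y h₀ x| ≤ ε := by
  rw [heightFn_eq_sSup_image, heightFn_eq_sSup_image]
  refine abs_sSup_image_sub_sSup_image_le hε fun y hy => ?_
  rw [add_sub_add_left_eq_sub]
  exact abs_lpp_sub_lpp_le hfg hε
    (fun u hu v hv => hosc u (hy.1.trans hu) v (hy.1.trans hv)) x

end TopLinePerturbation

theorem resampled_height_lipschitz_general (n : ℕ) (f : Fin (n + 1) → ℝ → ℝ)
    (φ : ℝ → ℝ)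
    (hφ01 : ∀ u : ℝ, 0 ≤ u → φ u ∈ Icc (0 : ℝ) 1)
    (Y : ℝ)
    (h₀ : ℝ → ℝ)
    (fz : ℝ → Fin (n + 1) → ℝ → ℝ)
    (hfz : ∀ z i u, fz z i u = if i = 0 then f i u + z * φ u else f i u)
    (z₁ z₂ : ℝ) :
    (∀ x : ℝ, 0 ≤ x →
        |heightFn (n + 1) (fz z₁) Y h₀ x - heightFn (n + 1) (fz z₂) Y h₀ x|
          ≤ 2 * |z₁ - z₂|) ∧
      (∀ c d : ℝ, 0 ≤ c → c ≤ d →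
        |sSup (heightFn (n + 1) (fz z₁) Y h₀ '' Icc c d)
            - sSup (heightFn (n + 1) (fz z₂) Y h₀ '' Icc c d)|
          ≤ 2 * |z₁ - z₂|) := by
  have hε : 0 ≤ |z₁ - z₂| := abs_nonneg _
  have htail : ∀ i ≠ 0, fz z₁ i = fz z₂ i := fun i hi => funext fun u => by simp [hfz, hi]
  have hosc : ∀ u ∈ Ici (0 : ℝ), ∀ v ∈ Ici (0 : ℝ),
      |(fz z₁ 0 u - fz z₂ 0 u) - (fz z₁ 0 v - fz z₂ 0 v)| ≤ |z₁ - z₂| := by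
    intro u hu v hv
    obtain ⟨hu₀, hu₁⟩ := hφ01 u hu
    obtain ⟨hv₀, hv₁⟩ := hφ01 v hv
    calc |(fz z₁ 0 u - fz z₂ 0 u) - (fz z₁ 0 v - fz z₂ 0 v)|
        = |z₁ - z₂| * |φ u - φ v| := by
          simp only [hfz, if_pos, ← abs_mul]
          congr 1
          ring
      _ ≤ |z₁ - z₂| * 1 := by gcongr; exact abs_sub_le_of_nonneg_of_le hu₀ hu₁ hv₀ hv₁
      _ = |z₁ - z₂| := mul_one _
  have hpoint := abs_heightFn_sub_heightFn_le htail hε hosc Y h₀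
  have h2ε : |z₁ - z₂| ≤ 2 * |z₁ - z₂| := by linarith
  exact ⟨fun x _ => (hpoint x).trans h2ε, fun c d _ _ =>
    (abs_sSup_image_sub_sSup_image_le hε fun x _ => hpoint x).trans h2ε⟩

/-- The deterministic form of Lemma 5.11 (l.lipschitz): when the top line of an
environment on `n + 1` lines is perturbed by `z · φ` with `φ` continuous taking values
in `[0, 1]`, the resulting height function (built from bounded-above initial data `h₀`
on `[0, Y]`) is `2`-Lipschitz in `z`, pointwise and after taking the supremum over any
window `[c, d] ⊆ [0, ∞)`. -/
theorem resampled_height_lipschitz (n : ℕ) (f : Fin (n + 1) → ℝ → ℝ)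
    (hf : ∀ i, ContinuousOn (f i) (Ici 0))
    (φ : ℝ → ℝ) (hφc : ContinuousOn φ (Ici 0))
    (hφ01 : ∀ u : ℝ, 0 ≤ u → φ u ∈ Icc (0 : ℝ) 1)
    (Y : ℝ) (hY : 0 ≤ Y)
    (h₀ : ℝ → ℝ) (hh₀ : ∃ B : ℝ, ∀ y ∈ Icc 0 Y, h₀ y ≤ B)
    (fz : ℝ → Fin (n + 1) → ℝ → ℝ)
    (hfz : ∀ z i u, fz z i u = if i = 0 then f i u + z * φ u else f i u)
    (z₁ z₂ : ℝ) :
    (∀ x : ℝ, 0 ≤ x →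
        |heightFn (n + 1) (fz z₁) Y h₀ x - heightFn (n + 1) (fz z₂) Y h₀ x|
          ≤ 2 * |z₁ - z₂|) ∧
      (∀ c d : ℝ, 0 ≤ c → c ≤ d →
        |sSup (heightFn (n + 1) (fz z₁) Y h₀ '' Icc c d)
            - sSup (heightFn (n + 1) (fz z₂) Y h₀ '' Icc c d)|
          ≤ 2 * |z₁ - z₂|) :=
  resampled_height_lipschitz_general n f φ hφ01 Y h₀ fz hfz z₁ z₂
end

section
/- Let n ≥ 2, let f = (f₁, …, f_n) be an environment on n lines, let Y ≥ 0, and let h₀ : [0,Y] → ℝ be bounded above. Define H(x) := sup_{0 ≤ y ≤ min(Y,x)} ( h₀(y) + f[(y,n)→(x,1)] ) for x ≥ 0. Then for every t ≥ 0 and s > 0: H(t + s) = max{ H(t) + f₁(t+s) − f₁(t) , sup_{t < u ≤ t+s} sup_{0 ≤ y ≤ min(Y,u)} ( h₀(y) + f[(y,n)→(u,2)] + f₁(t+s) − f₁(u) ) }. -/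
open Set

/-!
Split an upright path to `(t + s, 1)` at the time `u` it jumps onto the top line. If `u ≤ t`,
the same path stopped at `(t, 1)` is admissible for `H(t)`, and the two weights differ by the top-line
increment `f₁(t+s) - f₁(t)`; if `u > t`, the path is exactly one of those in the second supremum.
Conversely, every path in either term extends along the top line to a path to `(t + s, 1)`.
Continuity of the environment on compact intervals keeps every supremum finite.
-/

namespace IsJumpTimes

variable {n : ℕ} {y x : ℝ}

theorem antitone {T : Fin (n + 1) → ℝ} (hT : IsJumpTimes n y x T) : Antitone T :=
  Fin.antitone_iff_succ_le.mpr hT.2.2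

theorem mem_Icc {T : Fin (n + 1) → ℝ} (hT : IsJumpTimes n y x T) (i : Fin (n + 1)) :
    T i ∈ Icc y x :=
  ⟨hT.1 ▸ hT.antitone (Fin.le_last i), hT.2.1 ▸ hT.antitone (Fin.zero_le i)⟩

theorem const (n : ℕ) (y : ℝ) : IsJumpTimes n y y (fun _ => y) :=
  ⟨rfl, rfl, fun _ => le_rfl⟩

theorem cons {u : ℝ} {T : Fin (n + 1) → ℝ} (hT : IsJumpTimes n y u T) (hux : u ≤ x) :
    IsJumpTimes (n + 1) y x (Fin.cons x T) := by
  refine ⟨?_, rfl, fun i => ?_⟩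
  · rw [← Fin.succ_last, Fin.cons_succ]
    exact hT.1
  · cases i using Fin.cases with
    | zero => simpa [hT.2.1] using hux
    | succ j =>
      rw [← Fin.succ_castSucc, Fin.cons_succ, Fin.cons_succ]
      exact hT.2.2 j

theorem tail {T : Fin (n + 2) → ℝ} (hT : IsJumpTimes (n + 1) y x T) :
    IsJumpTimes n y (T 1) (Fin.tail T) := by
  refine ⟨?_, rfl, fun j => ?_⟩
  · rw [Fin.tail, Fin.succ_last]
    exact hT.1
  · simpa only [Fin.tail, Fin.succ_castSucc] using hT.2.2 j.succ

end IsJumpTimes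

theorem exists_isJumpTimes (n : ℕ) {y x : ℝ} (hyx : y ≤ x) :
    ∃ T, IsJumpTimes (n + 1) y x T :=
  ⟨_, (IsJumpTimes.const n y).cons hyx⟩

theorem pathWeight_cons {n : ℕ} (f : Fin (n + 1) → ℝ → ℝ) (x : ℝ) (T : Fin (n + 1) → ℝ) :
    pathWeight (n + 1) f (Fin.cons x T)
      = f 0 x - f 0 (T 0) + pathWeight n (fun j => f j.succ) T := by
  simp only [pathWeight, Fin.sum_univ_succ, Fin.castSucc_zero, Fin.castSucc_succ, Fin.cons_zero,
    Fin.cons_succ]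

theorem exists_pathWeight_le {n : ℕ} (f : Fin n → ℝ → ℝ)
    (hf : ∀ i, ContinuousOn (f i) (Ici 0)) (X : ℝ) :
    ∃ C, ∀ y x T, 0 ≤ y → x ≤ X → IsJumpTimes n y x T → pathWeight n f T ≤ C := by
  choose M hM using fun i =>
    isCompact_Icc.exists_bound_of_continuousOn ((hf i).mono (Icc_subset_Ici_self : Icc 0 X ⊆ Ici 0))
  refine ⟨∑ i, (M i + M i), fun y x T hy hx hT => Finset.sum_le_sum fun i _ => ?_⟩
  have hmem : ∀ j, T j ∈ Icc 0 X := fun j =>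
    ⟨hy.trans (hT.mem_Icc j).1, (hT.mem_Icc j).2.trans hx⟩
  calc f i (T i.castSucc) - f i (T i.succ)
      ≤ ‖f i (T i.castSucc)‖ + ‖f i (T i.succ)‖ := (Real.le_norm_self _).trans (norm_sub_le _ _)
    _ ≤ M i + M i := add_le_add (hM i _ (hmem _)) (hM i _ (hmem _))

section lpp

variable {n : ℕ} {y x : ℝ}

theorem pathWeight_le_lpp {f : Fin n → ℝ → ℝ} (hf : ∀ i, ContinuousOn (f i) (Ici 0))
    (hy : 0 ≤ y) {T : Fin (n + 1) → ℝ} (hT : IsJumpTimes n y x T) :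
    pathWeight n f T ≤ lpp n f y x := by
  obtain ⟨C, hC⟩ := exists_pathWeight_le f hf x
  refine le_csSup ⟨C, ?_⟩ ⟨T, hT, rfl⟩
  rintro _ ⟨T', hT', rfl⟩
  exact hC y x T' hy le_rfl hT'

theorem lpp_le {f : Fin (n + 1) → ℝ → ℝ} (hyx : y ≤ x) {c : ℝ}
    (h : ∀ T, IsJumpTimes (n + 1) y x T → pathWeight (n + 1) f T ≤ c) :
    lpp (n + 1) f y x ≤ c := by
  obtain ⟨T, hT⟩ := exists_isJumpTimes n hyx
  refine csSup_le ⟨_, T, hT, rfl⟩ ?_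
  rintro _ ⟨T', hT', rfl⟩
  exact h T' hT'

theorem exists_lpp_le {f : Fin (n + 1) → ℝ → ℝ} (hf : ∀ i, ContinuousOn (f i) (Ici 0))
    (X : ℝ) : ∃ C, ∀ y x, 0 ≤ y → y ≤ x → x ≤ X → lpp (n + 1) f y x ≤ C := by
  obtain ⟨C, hC⟩ := exists_pathWeight_le f hf X
  exact ⟨C, fun y x hy hyx hx => lpp_le hyx fun T hT => hC y x T hy hx hT⟩

variable {f : Fin (n + 2) → ℝ → ℝ}

theorem add_lpp_tail_le_lpp (hf : ∀ i, ContinuousOn (f i) (Ici 0)) (hy : 0 ≤ y) {u : ℝ}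
    (hyu : y ≤ u) (hux : u ≤ x) :
    f 0 x - f 0 u + lpp (n + 1) (fun j => f j.succ) y u ≤ lpp (n + 2) f y x := by
  have : lpp (n + 1) (fun j => f j.succ) y u ≤ lpp (n + 2) f y x - (f 0 x - f 0 u) :=
    lpp_le hyu fun T hT => by
      have := pathWeight_le_lpp hf hy (hT.cons hux)
      rw [pathWeight_cons, hT.2.1] at this
      linarith
  linarith

theorem lpp_le_of_forall_add_lpp_tail_le (hf : ∀ i, ContinuousOn (f i) (Ici 0)) (hy : 0 ≤ y)
    (hyx : y ≤ x) {c : ℝ}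
    (h : ∀ u ∈ Icc y x, f 0 x - f 0 u + lpp (n + 1) (fun j => f j.succ) y u ≤ c) :
    lpp (n + 2) f y x ≤ c :=
  lpp_le hyx fun T hT =>
    calc pathWeight (n + 2) f T
        = f 0 x - f 0 (T 1) + pathWeight (n + 1) (fun j => f j.succ) (Fin.tail T) := by
          conv_lhs => rw [← Fin.cons_self_tail T]
          rw [pathWeight_cons, hT.2.1]
          rfl
      _ ≤ f 0 x - f 0 (T 1) + lpp (n + 1) (fun j => f j.succ) y (T 1) := by
          gcongr
          exact pathWeight_le_lpp (fun i => hf i.succ) hy hT.tail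
      _ ≤ c := h _ (hT.mem_Icc 1)

theorem lpp_add_sub_le_lpp (hf : ∀ i, ContinuousOn (f i) (Ici 0)) (hy : 0 ≤ y) {t : ℝ}
    (hyt : y ≤ t) (htx : t ≤ x) :
    lpp (n + 2) f y t + (f 0 x - f 0 t) ≤ lpp (n + 2) f y x := by
  have : lpp (n + 2) f y t ≤ lpp (n + 2) f y x - (f 0 x - f 0 t) :=
    lpp_le_of_forall_add_lpp_tail_le hf hy hyt fun u hu => by
      have := add_lpp_tail_le_lpp hf hy hu.1 (hu.2.trans htx)
      linarith
  linarith

end lpp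

section heightFn

variable {n : ℕ} {Y : ℝ} {h₀ : ℝ → ℝ} {x : ℝ}

theorem le_heightFn {f : Fin (n + 1) → ℝ → ℝ} (hf : ∀ i, ContinuousOn (f i) (Ici 0))
    (hh₀ : ∃ B : ℝ, ∀ y ∈ Icc 0 Y, h₀ y ≤ B) {y : ℝ} (hy : 0 ≤ y) (hyY : y ≤ Y) (hyx : y ≤ x) :
    h₀ y + lpp (n + 1) f y x ≤ heightFn (n + 1) f Y h₀ x := by
  obtain ⟨B, hB⟩ := hh₀
  obtain ⟨C, hC⟩ := exists_lpp_le hf x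
  refine le_csSup ⟨B + C, ?_⟩ ⟨y, hy, le_min hyY hyx, rfl⟩
  rintro _ ⟨z, hz, hzm, rfl⟩
  exact add_le_add (hB z ⟨hz, hzm.trans (min_le_left _ _)⟩)
    (hC z x hz (hzm.trans (min_le_right _ _)) le_rfl)

theorem heightFn_le {f : Fin n → ℝ → ℝ} (hY : 0 ≤ Y) (hx : 0 ≤ x) {c : ℝ}
    (h : ∀ y, 0 ≤ y → y ≤ Y → y ≤ x → h₀ y + lpp n f y x ≤ c) :
    heightFn n f Y h₀ x ≤ c := by
  refine csSup_le ⟨_, 0, le_rfl, le_min hY hx, rfl⟩ ?_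
  rintro _ ⟨y, hy, hym, rfl⟩
  exact h y hy (hym.trans (min_le_left _ _)) (hym.trans (min_le_right _ _))

theorem heightFn_add_sub_le_heightFn {f : Fin (n + 2) → ℝ → ℝ}
    (hf : ∀ i, ContinuousOn (f i) (Ici 0)) (hY : 0 ≤ Y)
    (hh₀ : ∃ B : ℝ, ∀ y ∈ Icc 0 Y, h₀ y ≤ B) {t : ℝ} (ht : 0 ≤ t) (htx : t ≤ x) :
    heightFn (n + 2) f Y h₀ t + (f 0 x - f 0 t) ≤ heightFn (n + 2) f Y h₀ x := by
  have : heightFn (n + 2) f Y h₀ t ≤ heightFn (n + 2) f Y h₀ x - (f 0 x - f 0 t) :=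
    heightFn_le hY ht fun y hy hyY hyt => by
      have := lpp_add_sub_le_lpp hf hy hyt htx
      have := le_heightFn hf hh₀ hy hyY (hyt.trans htx)
      linarith
  linarith

end heightFn

/-- The deterministic decomposition (e.h^n markov) from the proof of Lemma 5.12: for an
environment `f` on `m + 2 ≥ 2` lines and bounded-above initial data `h₀` on `[0, Y]`,
the height function satisfies, for `t ≥ 0` and `s > 0`,
`H(t+s) = max( H(t) + f₁(t+s) - f₁(t) ,
  sup_{t < u ≤ t+s} sup_{0 ≤ y ≤ min(Y,u)} ( h₀(y) + f[(y,n)→(u,2)] + f₁(t+s) - f₁(u) ) )`,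
where `f[(y,n)→(u,2)]` is the last passage value using only lines `2, …, n`. -/
theorem height_markov_decomposition (m : ℕ) (f : Fin (m + 2) → ℝ → ℝ)
    (hf : ∀ i, ContinuousOn (f i) (Ici 0))
    (Y : ℝ) (hY : 0 ≤ Y)
    (h₀ : ℝ → ℝ) (hh₀ : ∃ B : ℝ, ∀ y ∈ Icc 0 Y, h₀ y ≤ B)
    (t s : ℝ) (ht : 0 ≤ t) (hs : 0 < s) :
    heightFn (m + 2) f Y h₀ (t + s)
      = max (heightFn (m + 2) f Y h₀ t + f 0 (t + s) - f 0 t)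
          (sSup {w : ℝ | ∃ u : ℝ, t < u ∧ u ≤ t + s ∧
            ∃ y : ℝ, 0 ≤ y ∧ y ≤ min Y u ∧
              w = h₀ y + lpp (m + 1) (fun j : Fin (m + 1) => f j.succ) y u
                + f 0 (t + s) - f 0 u}) := by
  set x := t + s
  set H := heightFn (m + 2) f Y h₀
  set R := {w : ℝ | ∃ u : ℝ, t < u ∧ u ≤ x ∧ ∃ y : ℝ, 0 ≤ y ∧ y ≤ min Y u ∧
    w = h₀ y + lpp (m + 1) (fun j : Fin (m + 1) => f j.succ) y u + f 0 x - f 0 u}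
  have htx : t < x := lt_add_of_pos_right t hs
  have hx : 0 ≤ x := ht.trans htx.le
  have hR_le : ∀ w ∈ R, w ≤ H x := by
    rintro _ ⟨u, -, hux, y, hy, hym, rfl⟩
    have := add_lpp_tail_le_lpp hf hy (hym.trans (min_le_right _ _)) hux
    have := le_heightFn hf hh₀ hy (hym.trans (min_le_left _ _))
      ((hym.trans (min_le_right _ _)).trans hux)
    linarith
  refine le_antisymm (heightFn_le hY hx fun y hy hyY hyx => ?_) (max_le ?_ ?_)
  · suffices lpp (m + 2) f y x ≤ max (H t + f 0 x - f 0 t) (sSup R) - h₀ y by linarith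
    refine lpp_le_of_forall_add_lpp_tail_le hf hy hyx fun u ⟨hyu, hux⟩ => ?_
    rcases le_or_gt u t with hut | htu
    · have := add_lpp_tail_le_lpp hf hy hyu hut
      have := le_heightFn hf hh₀ hy hyY (hyu.trans hut)
      have := le_max_left (H t + f 0 x - f 0 t) (sSup R)
      linarith
    · have := le_csSup ⟨H x, hR_le⟩ ⟨u, htu, hux, y, hy, le_min hyY hyu, rfl⟩
      have := le_max_right (H t + f 0 x - f 0 t) (sSup R)
      linarith
  · linarith [heightFn_add_sub_le_heightFn hf hY hh₀ ht htx.le]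
  · exact csSup_le ⟨_, x, htx, le_rfl, 0, le_rfl, le_min hY hx, rfl⟩ hR_le
end
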